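/- Let (X_t)_{t∈(0,∞)} be a real-valued stochastic process whose finite-dimensional distributions are infinitely divisible, with characteristic exponents ψ_{t_1,…,t_k}, and suppose X is (f,g)-dilatively stable for continuous functions f, g : (0,∞) → (0,∞). Suppose ψ_1 admits a Lévy–Khintchine representation ψ_1(θ) = −i a θ + (1/2) σ² θ² + ∫_{ℝ∖{0}} (1 − e^{iθx} + iθx/(1+x²)) μ(dx) for all θ ∈ ℝ, where a ∈ ℝ, σ² > 0 and μ is a nonzero Lévy measure (so X_1 is not Gaussian but has a nontrivial Gaussian component). Then there exist unique β, γ ∈ ℝ such that f(T) = T^β and g(T) = T^γ for all T > 0. -/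

import Mathlib

/-!
Write `φ(θ) = Re ψ₁(θ) = σ²θ²/2 + R(θ)` with `R(θ) = ∫ (1 - cos θx) dμ(x)`; by dominated
convergence `R(θ) = o(θ²)`. Dilative stability applied twice gives
`g(cs) φ(f(cs) θ) = g(c) g(s) φ(f(c) f(s) θ)`. Comparing the `θ²` growth of both sides gives
`g(cs) f(cs)² = g(c) g(s) (f(c) f(s))²`, hence `R(rθ) = r² R(θ)` for `r = f(c) f(s) / f(cs)`.
If `r ≠ 1`, iterating this against `R(θ) = o(θ²)` forces `R ≡ 0`, so `μ` is carried by
`{x | cos x = 1 = cos πx} = {0}`, i.e. `μ = 0`. So `f` and `g` are continuous, positive and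
multiplicative on `(0, ∞)`, hence powers.
-/

open MeasureTheory Filter Topology Real

noncomputable def mconv {E : Type*} [MeasurableSpace E] [Add E]
    (μ ν : Measure E) : Measure E :=
  Measure.map (fun p : E × E => p.1 + p.2) (μ.prod ν)

noncomputable def convPow {E : Type*} [MeasurableSpace E] [Add E] [Zero E]
    (ν : Measure E) : ℕ → Measure E
  | 0 => Measure.dirac 0
  | n + 1 => mconv (convPow ν n) ν

noncomputable def oneSubCosIntegral (μ : Measure ℝ) (θ : ℝ) : ℝ :=
  ∫ x, (1 - cos (θ * x)) ∂μ

/-- The real part of the Lévy–Khintchine exponent with Gaussian variance `v` and Lévy measure `μ`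
(the drift term is purely imaginary). -/
noncomputable def levyKhintchineRe (v : ℝ) (μ : Measure ℝ) (θ : ℝ) : ℝ :=
  v / 2 * θ ^ 2 + oneSubCosIntegral μ θ

lemma oneSubCosIntegral_neg (μ : Measure ℝ) (θ : ℝ) :
    oneSubCosIntegral μ (-θ) = oneSubCosIntegral μ θ := by
  simp [oneSubCosIntegral, neg_mul, cos_neg]

lemma one_sub_cos_nonneg (x : ℝ) : 0 ≤ 1 - cos x := by linarith [cos_le_one x]

lemma one_sub_cos_mul_le (θ x : ℝ) :
    1 - cos (θ * x) ≤ 2 * max 1 (θ ^ 2) * min 1 (x ^ 2) := by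
  have h2 : 1 - cos (θ * x) ≤ 2 := by linarith [neg_one_le_cos (θ * x)]
  have hsq : 1 - cos (θ * x) ≤ θ ^ 2 * x ^ 2 / 2 := by
    nlinarith [one_sub_sq_div_two_le_cos (x := θ * x)]
  rcases le_total (x ^ 2) 1 with hx | hx
  · rw [min_eq_right hx]; nlinarith [le_max_right 1 (θ ^ 2), sq_nonneg x]
  · rw [min_eq_left hx]; nlinarith [le_max_left 1 (θ ^ 2)]

lemma norm_exp_I_mul_ofReal_sub_one_sub_le (y : ℝ) :
    ‖Complex.exp (Complex.I * y) - 1 - Complex.I * y‖ ≤ 2 * y ^ 2 := by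
  rcases le_total |y| 1 with hy | hy
  · have h := Complex.norm_exp_sub_one_sub_id_le (x := Complex.I * y) (by simpa using hy)
    simp only [norm_mul, Complex.norm_I, Complex.norm_real, norm_eq_abs, one_mul, sq_abs] at h
    nlinarith [sq_nonneg y]
  · calc ‖Complex.exp (Complex.I * y) - 1 - Complex.I * y‖
        ≤ ‖Complex.exp (Complex.I * y) - 1‖ + ‖Complex.I * y‖ := norm_sub_le _ _
      _ ≤ |y| + |y| := by
        gcongr
        · simpa using norm_exp_I_mul_ofReal_sub_one_le (x := y)
        · simp
      _ ≤ 2 * y ^ 2 := by nlinarith [sq_abs y]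

lemma abs_div_one_add_sq_le_one (x : ℝ) : |x| / (1 + x ^ 2) ≤ 1 := by
  rw [div_le_one (by positivity)]
  nlinarith [sq_abs x, sq_nonneg (|x| - 1)]

lemma norm_levyKhintchine_integrand_le (θ x : ℝ) :
    ‖1 - Complex.exp (Complex.I * θ * x) + Complex.I * θ * x / (1 + (x : ℂ) ^ 2)‖
      ≤ 2 * (1 + |θ|) ^ 2 * min 1 (x ^ 2) := by
  have hpos : (0 : ℝ) < 1 + x ^ 2 := by positivity
  have hy : Complex.I * θ * x = Complex.I * ((θ * x : ℝ) : ℂ) := by push_cast; ring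
  have hq : Complex.I * θ * x / (1 + (x : ℂ) ^ 2)
      = Complex.I * ((θ * x / (1 + x ^ 2) : ℝ) : ℂ) := by push_cast; ring
  have hθ := abs_nonneg θ
  rcases le_total (x ^ 2) 1 with hx | hx
  · have hx1 : |x| ≤ 1 := abs_le_one_iff_mul_self_le_one.2 (by nlinarith)
    have hdecomp : 1 - Complex.exp (Complex.I * θ * x) + Complex.I * θ * x / (1 + (x : ℂ) ^ 2)
        = -(Complex.exp (Complex.I * ((θ * x : ℝ) : ℂ)) - 1 - Complex.I * ((θ * x : ℝ) : ℂ))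
          - Complex.I * ((θ * x * (x ^ 2 / (1 + x ^ 2)) : ℝ) : ℂ) := by
      have : (1 + (x : ℂ) ^ 2) ≠ 0 := by exact_mod_cast hpos.ne'
      push_cast; field_simp; ring
    have hrem : |θ * x * (x ^ 2 / (1 + x ^ 2))| ≤ |θ| * x ^ 2 := by
      rw [abs_mul, abs_mul, abs_of_nonneg (by positivity : 0 ≤ x ^ 2 / (1 + x ^ 2))]
      calc |θ| * |x| * (x ^ 2 / (1 + x ^ 2)) ≤ |θ| * 1 * x ^ 2 := by
            gcongr
            exact div_le_self (sq_nonneg x) (by nlinarith [sq_nonneg x])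
        _ = |θ| * x ^ 2 := by ring
    rw [hdecomp, min_eq_right hx]
    calc _ ≤ 2 * (θ * x) ^ 2 + |θ| * x ^ 2 := by
          refine (norm_sub_le _ _).trans (add_le_add ?_ ?_)
          · rw [norm_neg]; exact norm_exp_I_mul_ofReal_sub_one_sub_le _
          · rw [norm_mul, Complex.norm_I, one_mul, Complex.norm_real, norm_eq_abs]; exact hrem
      _ ≤ 2 * (1 + |θ|) ^ 2 * x ^ 2 := by nlinarith [sq_abs θ, sq_nonneg x]
  · have hE : ‖1 - Complex.exp (Complex.I * θ * x)‖ ≤ 2 := by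
      refine (norm_sub_le _ _).trans ?_
      rw [hy, Complex.norm_exp_I_mul_ofReal]; norm_num
    have hrem : ‖Complex.I * θ * x / (1 + (x : ℂ) ^ 2)‖ ≤ |θ| := by
      rw [hq, norm_mul, Complex.norm_I, one_mul, Complex.norm_real, norm_eq_abs, mul_div_assoc,
        abs_mul, abs_div, abs_of_pos hpos]
      exact mul_le_of_le_one_right hθ (abs_div_one_add_sq_le_one x)
    rw [min_eq_left hx]
    calc _ ≤ 2 + |θ| := (norm_add_le _ _).trans (add_le_add hE hrem)
      _ ≤ 2 * (1 + |θ|) ^ 2 * 1 := by nlinarith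

lemma re_levyKhintchine_integrand (θ x : ℝ) :
    (1 - Complex.exp (Complex.I * θ * x) + Complex.I * θ * x / (1 + (x : ℂ) ^ 2)).re
      = 1 - cos (θ * x) := by
  have hy : Complex.I * θ * x = ((θ * x : ℝ) : ℂ) * Complex.I := by push_cast; ring
  have hq : Complex.I * θ * x / (1 + (x : ℂ) ^ 2)
      = ((θ * x / (1 + x ^ 2) : ℝ) : ℂ) * Complex.I := by push_cast; ring
  rw [hq, hy]
  simp only [Complex.sub_re, Complex.add_re, Complex.one_re, Complex.exp_ofReal_mul_I_re,
    Complex.re_ofReal_mul, Complex.I_re, mul_zero, add_zero]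

lemma eq_zero_of_cos_eq_one_of_cos_pi_mul_eq_one {x : ℝ} (h1 : cos x = 1)
    (hπ : cos (π * x) = 1) : x = 0 := by
  obtain ⟨n, rfl⟩ := (cos_eq_one_iff x).1 h1
  obtain ⟨m, hm⟩ := (cos_eq_one_iff _).1 hπ
  have hn : n = 0 := by
    by_contra hn
    refine (irrational_pi.mul_intCast hn).ne_int m ?_
    have : (m : ℝ) * (2 * π) = π * n * (2 * π) := by rw [hm]; ring
    exact (mul_right_cancel₀ (by positivity) this).symm
  simp [hn]

section LevyMeasure

variable {μ : Measure ℝ}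

lemma integrable_min_one_sq_of_lintegral_lt_top
    (h : ∫⁻ x, ENNReal.ofReal (min 1 (x ^ 2)) ∂μ < ⊤) :
    Integrable (fun x : ℝ => min 1 (x ^ 2)) μ :=
  ⟨by fun_prop, (hasFiniteIntegral_iff_ofReal (ae_of_all _ fun x => by positivity)).2 h⟩

lemma integrable_one_sub_cos_mul (hμ : Integrable (fun x : ℝ => min 1 (x ^ 2)) μ) (θ : ℝ) :
    Integrable (fun x => 1 - cos (θ * x)) μ :=
  (hμ.const_mul (2 * max 1 (θ ^ 2))).mono' (by fun_prop) <| ae_of_all _ fun x => by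
    rw [norm_of_nonneg (one_sub_cos_nonneg _)]
    exact one_sub_cos_mul_le θ x

lemma integrable_levyKhintchine_integrand (hμ : Integrable (fun x : ℝ => min 1 (x ^ 2)) μ)
    (θ : ℝ) :
    Integrable (fun x : ℝ =>
      1 - Complex.exp (Complex.I * θ * x) + Complex.I * θ * x / (1 + (x : ℂ) ^ 2)) μ := by
  refine (hμ.const_mul (2 * (1 + |θ|) ^ 2)).mono' ?_
    (ae_of_all _ (norm_levyKhintchine_integrand_le θ))
  have hden : ∀ x : ℝ, (1 + (x : ℂ) ^ 2) ≠ 0 := fun x => by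
    exact_mod_cast (by positivity : (1 + x ^ 2 : ℝ) ≠ 0)
  exact (Continuous.aestronglyMeasurable (by fun_prop (disch := exact hden _)))

lemma re_levyKhintchine (hμ : Integrable (fun x : ℝ => min 1 (x ^ 2)) μ) (a v θ : ℝ) :
    (-(Complex.I * (a : ℂ) * (θ : ℂ)) + (1 / 2 : ℂ) * (v : ℂ) * (θ : ℂ) ^ 2
      + ∫ x : ℝ, (1 - Complex.exp (Complex.I * (θ : ℂ) * (x : ℂ))
        + Complex.I * (θ : ℂ) * (x : ℂ) / (1 + (x : ℂ) ^ 2)) ∂μ).re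
      = levyKhintchineRe v μ θ := by
  have hint : (∫ x : ℝ, (1 - Complex.exp (Complex.I * (θ : ℂ) * (x : ℂ))
      + Complex.I * (θ : ℂ) * (x : ℂ) / (1 + (x : ℂ) ^ 2)) ∂μ).re = oneSubCosIntegral μ θ := by
    rw [← RCLike.re_to_complex, ← integral_re (integrable_levyKhintchine_integrand hμ θ)]
    exact integral_congr_ae (ae_of_all _ fun x => re_levyKhintchine_integrand θ x)
  rw [Complex.add_re, hint, levyKhintchineRe]
  have hgauss : ((1 / 2 : ℂ) * (v : ℂ) * (θ : ℂ) ^ 2) = ((v / 2 * θ ^ 2 : ℝ) : ℂ) := by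
    push_cast; ring
  rw [hgauss, Complex.add_re, Complex.ofReal_re]
  simp

lemma tendsto_oneSubCosIntegral_div_sq (hμ : Integrable (fun x : ℝ => min 1 (x ^ 2)) μ) :
    Tendsto (fun θ => oneSubCosIntegral μ θ / θ ^ 2) atTop (𝓝 0) := by
  have hlim : Tendsto (fun θ : ℝ => ∫ x, (1 - cos (θ * x)) / θ ^ 2 ∂μ) atTop
      (𝓝 (∫ _, (0 : ℝ) ∂μ)) := by
    refine tendsto_integral_filter_of_dominated_convergence (fun x => 2 * min 1 (x ^ 2))
      (Eventually.of_forall fun θ => by fun_prop) ?_ (hμ.const_mul 2) ?_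
    · filter_upwards [eventually_ge_atTop 1] with θ hθ
      refine ae_of_all _ fun x => ?_
      have h := one_sub_cos_mul_le θ x
      rw [max_eq_right (by nlinarith)] at h
      rw [norm_of_nonneg (div_nonneg (one_sub_cos_nonneg _) (sq_nonneg θ)),
        div_le_iff₀ (by positivity)]
      linarith
    · refine ae_of_all _ fun x => ?_
      refine squeeze_zero (fun θ => div_nonneg (one_sub_cos_nonneg _) (sq_nonneg θ))
        (fun θ => div_le_div_of_nonneg_right
          (show 1 - cos (θ * x) ≤ 2 by linarith [neg_one_le_cos (θ * x)]) (sq_nonneg θ))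
        (tendsto_const_nhds.div_atTop (tendsto_pow_atTop two_ne_zero))
  simpa [oneSubCosIntegral, integral_div] using hlim

lemma oneSubCosIntegral_eq_zero_of_scaling (hμ : Integrable (fun x : ℝ => min 1 (x ^ 2)) μ)
    {r : ℝ} (hr : 1 < r) (h : ∀ θ, oneSubCosIntegral μ (r * θ) = r ^ 2 * oneSubCosIntegral μ θ)
    (θ : ℝ) : oneSubCosIntegral μ θ = 0 := by
  suffices hpos : ∀ θ, 0 < θ → oneSubCosIntegral μ θ = 0 by
    rcases lt_trichotomy θ 0 with hθ | rfl | hθ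
    · rw [← oneSubCosIntegral_neg]; exact hpos _ (neg_pos.2 hθ)
    · simp [oneSubCosIntegral]
    · exact hpos θ hθ
  intro θ hθ
  have hinv : ∀ n : ℕ, oneSubCosIntegral μ (r ^ n * θ) / (r ^ n * θ) ^ 2
      = oneSubCosIntegral μ θ / θ ^ 2 := by
    intro n
    induction n with
    | zero => simp
    | succ n ih =>
      rw [pow_succ', mul_assoc, h, mul_pow r, mul_div_mul_left _ _ (by positivity), ih]
  have hlim := (tendsto_oneSubCosIntegral_div_sq hμ).comp
    ((tendsto_pow_atTop_atTop_of_one_lt hr).atTop_mul_const hθ)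
  simp only [Function.comp_def, hinv, tendsto_const_nhds_iff, div_eq_zero_iff] at hlim
  exact hlim.resolve_right (by positivity)

lemma measure_eq_zero_of_oneSubCosIntegral_eq_zero
    (hμ : Integrable (fun x : ℝ => min 1 (x ^ 2)) μ) (hμ0 : μ {0} = 0)
    (h : ∀ θ, oneSubCosIntegral μ θ = 0) : μ = 0 := by
  have hcos : ∀ θ, ∀ᵐ x ∂μ, cos (θ * x) = 1 := fun θ => by
    filter_upwards [(integral_eq_zero_iff_of_nonneg (fun x => one_sub_cos_nonneg _)
      (integrable_one_sub_cos_mul hμ θ)).1 (h θ)] with x hx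
    simp only [Pi.zero_apply] at hx
    linarith
  have hfalse : ∀ᵐ x ∂μ, False := by
    filter_upwards [hcos 1, hcos π, measure_eq_zero_iff_ae_notMem.1 hμ0] with x h1 hπ hx
    exact hx (eq_zero_of_cos_eq_one_of_cos_pi_mul_eq_one (by simpa using h1) hπ)
  exact ae_eq_bot.1 (eventually_false_iff_eq_bot.1 hfalse)

lemma tendsto_levyKhintchineRe_mul_div_sq (hμ : Integrable (fun x : ℝ => min 1 (x ^ 2)) μ)
    (v : ℝ) {u : ℝ} (hu : 0 < u) :
    Tendsto (fun θ => levyKhintchineRe v μ (u * θ) / θ ^ 2) atTop (𝓝 (v / 2 * u ^ 2)) := by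
  have hR := ((tendsto_oneSubCosIntegral_div_sq hμ).comp
    (tendsto_id.const_mul_atTop hu)).const_mul (u ^ 2)
  rw [mul_zero] at hR
  have hlim := (tendsto_const_nhds (x := v / 2 * u ^ 2)).add hR
  rw [add_zero] at hlim
  refine hlim.congr' ?_
  filter_upwards [eventually_ne_atTop 0] with θ hθ
  simp only [Function.comp_apply, id, levyKhintchineRe]
  field_simp

lemma eq_and_eq_of_mul_levyKhintchineRe_eq (hμ : Integrable (fun x : ℝ => min 1 (x ^ 2)) μ)
    (hμ0 : μ {0} = 0) (hμne : μ ≠ 0) {v : ℝ} (hv : 0 < v) {A B u w : ℝ} (hA : 0 < A)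
    (hB : 0 < B) (hu : 0 < u) (hw : 0 < w)
    (h : ∀ θ, A * levyKhintchineRe v μ (u * θ) = B * levyKhintchineRe v μ (w * θ)) :
    u = w ∧ A = B := by
  wlog huw : u ≤ w generalizing A B u w
  · exact (this hB hA hw hu (fun θ => (h θ).symm) (le_of_not_ge huw)).imp Eq.symm Eq.symm
  have hsq : A * u ^ 2 = B * w ^ 2 := by
    have hlim := tendsto_nhds_unique
      ((tendsto_levyKhintchineRe_mul_div_sq hμ v hu).const_mul A)
      (((tendsto_levyKhintchineRe_mul_div_sq hμ v hw).const_mul B).congr fun θ => by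
        rw [← mul_div_assoc, ← h, mul_div_assoc])
    have hv2 : v / 2 ≠ 0 := by positivity
    exact mul_left_cancel₀ hv2 (by linear_combination hlim)
  rcases huw.eq_or_lt with rfl | hlt
  · exact ⟨rfl, mul_right_cancel₀ (by positivity) hsq⟩
  set r := w / u
  have hA' : A = B * r ^ 2 := by
    rw [div_pow, mul_div_assoc', eq_div_iff (by positivity)]
    exact hsq
  refine absurd (measure_eq_zero_of_oneSubCosIntegral_eq_zero hμ hμ0 <|
    oneSubCosIntegral_eq_zero_of_scaling hμ ((one_lt_div hu).2 hlt) fun s => ?_) hμne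
  have hs := h (s / u)
  rw [show u * (s / u) = s by field_simp, show w * (s / u) = r * s by ring, levyKhintchineRe,
    levyKhintchineRe, hA'] at hs
  exact mul_left_cancel₀ hB.ne' (by linear_combination -hs)

end LevyMeasure

lemma exists_eq_rpow_of_map_mul {f : ℝ → ℝ} (hpos : ∀ c, 0 < c → 0 < f c)
    (hcont : ContinuousOn f (Set.Ioi 0))
    (hmul : ∀ c s, 0 < c → 0 < s → f (c * s) = f c * f s) :
    ∃ β : ℝ, ∀ c, 0 < c → f c = c ^ β := by
  let F : ℝ →+ ℝ := AddMonoidHom.mk' (fun x => log (f (exp x))) fun x y => by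
    rw [exp_add, hmul _ _ (exp_pos x) (exp_pos y),
      log_mul (hpos _ (exp_pos x)).ne' (hpos _ (exp_pos y)).ne']
  have hF : Continuous F :=
    (hcont.comp_continuous continuous_exp exp_pos).log fun x => (hpos _ (exp_pos x)).ne'
  refine ⟨F 1, fun c hc => ?_⟩
  have hlin := map_real_smul F hF (log c) 1
  simp only [smul_eq_mul, mul_one] at hlin
  rw [rpow_def_of_pos hc, ← hlin]
  simp [F, exp_log hc, exp_log (hpos c hc)]

lemma mul_apply_one_eq_of_dilation {Ψ : ℝ → ℝ → ℂ} {f g : ℝ → ℝ}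
    (h : ∀ c, 0 < c → ∀ s, 0 < s → ∀ θ, Ψ (c * s) θ = g c * Ψ s (f c * θ))
    {c s : ℝ} (hc : 0 < c) (hs : 0 < s) (θ : ℝ) :
    g (c * s) * Ψ 1 (f (c * s) * θ) = ((g c * g s : ℝ) : ℂ) * Ψ 1 (f c * f s * θ) := by
  have hone : ∀ t, 0 < t → ∀ θ, Ψ t θ = g t * Ψ 1 (f t * θ) := fun t ht θ => by
    simpa using h t ht 1 one_pos θ
  rw [← hone _ (mul_pos hc hs), h c hc s hs, hone s hs, Complex.ofReal_mul, mul_assoc,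
    mul_left_comm (f s), mul_assoc (f c)]

theorem fg_power_of_gaussian_component_general
    (ψ : ∀ k : ℕ, (Fin k → ℝ) → (Fin k → ℝ) → ℂ)
    (f g : ℝ → ℝ)
    (hfpos : ∀ c : ℝ, 0 < c → 0 < f c) (hgpos : ∀ c : ℝ, 0 < c → 0 < g c)
    (hfcont : ContinuousOn f (Set.Ioi 0)) (hgcont : ContinuousOn g (Set.Ioi 0))
    -- (f,g)-dilative stability
    (hDS : ∀ c : ℝ, 0 < c → ∀ (k : ℕ) (t : Fin k → ℝ), (∀ i, 0 < t i) →
      ∀ θ : Fin k → ℝ,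
        ψ k (fun i => c * t i) θ = ((g c : ℝ) : ℂ) * ψ k t (fun i => f c * θ i))
    -- Lévy–Khintchine representation of `ψ₁` with nontrivial Gaussian part `v = σ² > 0`
    -- and nonzero Lévy measure `μ`
    (a v : ℝ) (hv : 0 < v)
    (μ : Measure ℝ) (hμ0 : μ {0} = 0) (hμne : μ ≠ 0)
    (hlevy : ∫⁻ x, ENNReal.ofReal (min 1 (x ^ 2)) ∂μ < ⊤)
    (hLK : ∀ θ : ℝ,
      ψ 1 (fun _ => 1) (fun _ => θ)
        = -(Complex.I * (a : ℂ) * (θ : ℂ)) + (1 / 2 : ℂ) * (v : ℂ) * (θ : ℂ) ^ 2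
          + ∫ x : ℝ,
              (1 - Complex.exp (Complex.I * (θ : ℂ) * (x : ℂ))
                + Complex.I * (θ : ℂ) * (x : ℂ) / (1 + (x : ℂ) ^ 2)) ∂μ) :
    ∃! p : ℝ × ℝ, ∀ c : ℝ, 0 < c → f c = c ^ p.1 ∧ g c = c ^ p.2 := by
  have hμ := integrable_min_one_sq_of_lintegral_lt_top hlevy
  have hre : ∀ θ, (ψ 1 (fun _ => 1) (fun _ => θ)).re = levyKhintchineRe v μ θ := fun θ => by
    rw [hLK, re_levyKhintchine hμ]
  have hmul : ∀ c s, 0 < c → 0 < s → f (c * s) = f c * f s ∧ g (c * s) = g c * g s := by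
    intro c s hc hs
    have hdil := mul_apply_one_eq_of_dilation (Ψ := fun t θ => ψ 1 (fun _ => t) (fun _ => θ))
      (fun c hc s hs θ => hDS c hc 1 (fun _ => s) (fun _ => hs) (fun _ => θ)) hc hs
    exact eq_and_eq_of_mul_levyKhintchineRe_eq hμ hμ0 hμne hv (hgpos _ (mul_pos hc hs))
      (mul_pos (hgpos c hc) (hgpos s hs)) (hfpos _ (mul_pos hc hs))
      (mul_pos (hfpos c hc) (hfpos s hs))
      fun θ => by simpa only [Complex.re_ofReal_mul, hre] using congrArg Complex.re (hdil θ)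
  obtain ⟨β, hβ⟩ := exists_eq_rpow_of_map_mul hfpos hfcont fun c s hc hs => (hmul c s hc hs).1
  obtain ⟨γ, hγ⟩ := exists_eq_rpow_of_map_mul hgpos hgcont fun c s hc hs => (hmul c s hc hs).2
  refine ⟨(β, γ), fun c hc => ⟨hβ c hc, hγ c hc⟩, fun p hp => ?_⟩
  obtain ⟨hβp, hγp⟩ := hp 2 two_pos
  rw [hβ 2 two_pos, rpow_right_inj two_pos (by norm_num)] at hβp
  rw [hγ 2 two_pos, rpow_right_inj two_pos (by norm_num)] at hγp
  exact Prod.ext hβp.symm hγp.symm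

/-- If an infinitely divisible process indexed by `(0,∞)` is
`(f,g)`-dilatively stable and `X₁` is non-Gaussian but has a nontrivial Gaussian component
in its Lévy–Khintchine representation, then `f` and `g` are uniquely determined
power functions. -/
theorem fg_power_of_gaussian_component
    {Ω : Type*} [MeasurableSpace Ω] (P : Measure Ω) [IsProbabilityMeasure P]
    (X : ℝ → Ω → ℝ) (hX : ∀ t : ℝ, 0 < t → Measurable (X t))
    (ψ : ∀ k : ℕ, (Fin k → ℝ) → (Fin k → ℝ) → ℂ)
    (hψ0 : ∀ (k : ℕ) (t : Fin k → ℝ), (∀ i, 0 < t i) → ψ k t 0 = 0)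
    (hψcont : ∀ (k : ℕ) (t : Fin k → ℝ), (∀ i, 0 < t i) → Continuous (ψ k t))
    (hψchar : ∀ (k : ℕ) (t : Fin k → ℝ), (∀ i, 0 < t i) → ∀ θ : Fin k → ℝ,
      ∫ ω, Complex.exp (Complex.I * ∑ j, (θ j : ℂ) * (X (t j) ω : ℂ)) ∂P
        = Complex.exp (-ψ k t θ))
    (hID : ∀ (k : ℕ) (t : Fin k → ℝ), (∀ i, 0 < t i) → ∀ n : ℕ, 0 < n →
      ∃ ρ : Measure (Fin k → ℝ), IsProbabilityMeasure ρ ∧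
        convPow ρ n = Measure.map (fun ω i => X (t i) ω) P)
    (f g : ℝ → ℝ)
    (hfpos : ∀ c : ℝ, 0 < c → 0 < f c) (hgpos : ∀ c : ℝ, 0 < c → 0 < g c)
    (hfcont : ContinuousOn f (Set.Ioi 0)) (hgcont : ContinuousOn g (Set.Ioi 0))
    -- (f,g)-dilative stability
    (hDS : ∀ c : ℝ, 0 < c → ∀ (k : ℕ) (t : Fin k → ℝ), (∀ i, 0 < t i) →
      ∀ θ : Fin k → ℝ,
        ψ k (fun i => c * t i) θ = ((g c : ℝ) : ℂ) * ψ k t (fun i => f c * θ i))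
    -- Lévy–Khintchine representation of `ψ₁` with nontrivial Gaussian part `v = σ² > 0`
    -- and nonzero Lévy measure `μ`
    (a v : ℝ) (hv : 0 < v)
    (μ : Measure ℝ) (hμ0 : μ {0} = 0) (hμne : μ ≠ 0)
    (hlevy : ∫⁻ x, ENNReal.ofReal (min 1 (x ^ 2)) ∂μ < ⊤)
    (hLK : ∀ θ : ℝ,
      ψ 1 (fun _ => 1) (fun _ => θ)
        = -(Complex.I * (a : ℂ) * (θ : ℂ)) + (1 / 2 : ℂ) * (v : ℂ) * (θ : ℂ) ^ 2
          + ∫ x : ℝ,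
              (1 - Complex.exp (Complex.I * (θ : ℂ) * (x : ℂ))
                + Complex.I * (θ : ℂ) * (x : ℂ) / (1 + (x : ℂ) ^ 2)) ∂μ) :
    ∃! p : ℝ × ℝ, ∀ c : ℝ, 0 < c → f c = c ^ p.1 ∧ g c = c ^ p.2 :=
  fg_power_of_gaussian_component_general ψ f g hfpos hgpos hfcont hgcont hDS a v hv μ hμ0 hμne hlevy
    hLK
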